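/- Let 𝔰 = span_ℝ R, 𝔠 = 𝔰^⊥, with orthogonal projections π_𝔰, π_𝔠, and let λ ∈ 𝔞_ℂ. Suppose g : 𝔞 → ℂ is continuously differentiable with g(0) = 1, g(x) = g(π_𝔰 x) for all x ∈ 𝔞, and D_ξ(R_+,k) g(x) = ⟨π_𝔰 λ, ξ⟩ g(x) for all ξ ∈ 𝔞 and all regular x. Then the function f(x) := e^{⟨π_𝔠 λ, π_𝔠 x⟩} g(x) satisfies f(0) = 1 and D_ξ(R_+,k) f(x) = ⟨λ, ξ⟩ f(x) for all ξ ∈ 𝔞 and all regular x ∈ 𝔞. -/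

import Mathlib

open scoped BigOperators RealInnerProductSpace
open Finset

variable {𝔞 : Type*} [NormedAddCommGroup 𝔞] [InnerProductSpace ℝ 𝔞] [FiniteDimensional ℝ 𝔞]

/-- The reflection `s_α x = x − ⟨α^∨, x⟩ α`. -/
noncomputable def sRefl (α x : 𝔞) : 𝔞 := x - (2 * ⟪α, x⟫ / ⟪α, α⟫) • α

/-- An integral root system. -/
def IsIntegralRootSystem (R : Finset 𝔞) : Prop :=
  (0 : 𝔞) ∉ R ∧
  (∀ α ∈ R, ∀ β ∈ R, ∃ z : ℤ, 2 * ⟪α, β⟫ / ⟪α, α⟫ = (z : ℝ)) ∧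
  (∀ α ∈ R, ∀ β ∈ R, sRefl α β ∈ R)

/-- A positive system of the root system `R`. -/
def IsPositiveSystem (R Rp : Finset 𝔞) : Prop :=
  ∃ v : 𝔞, (∀ α ∈ R, ⟪α, v⟫ ≠ 0) ∧ ∀ α : 𝔞, α ∈ Rp ↔ α ∈ R ∧ 0 < ⟪α, v⟫

/-- `ρ(R_+, k) = (1/2) ∑_{α ∈ R_+} k_α α`. -/
noncomputable def rho (Rp : Finset 𝔞) (k : 𝔞 → ℝ) : 𝔞 := (1/2 : ℝ) • ∑ α ∈ Rp, k α • α

/-- A regular point. -/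
def IsRegularPt (R : Finset 𝔞) (x : 𝔞) : Prop := ∀ α ∈ R, ⟪α, x⟫ ≠ 0

/-- The Cherednik operator `D_ξ(R_+,k)` applied pointwise. -/
noncomputable def cherednik (Rp : Finset 𝔞) (k : 𝔞 → ℝ) (ξ : 𝔞) (f : 𝔞 → ℂ) (x : 𝔞) : ℂ :=
  fderiv ℝ f x ξ - (⟪rho Rp k, ξ⟫ : ℂ) * f x
    + ∑ α ∈ Rp, ((k α * ⟪α, ξ⟫ : ℝ) : ℂ) * (f x - f (sRefl α x))
        / (1 - Complex.exp (-(⟪α, x⟫ : ℝ) : ℂ))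

/-- Orthogonal projection onto the span of a finite set. -/
noncomputable def projSpan (S : Finset 𝔞) (x : 𝔞) : 𝔞 :=
  (Submodule.orthogonalProjection (Submodule.span ℝ (S : Set 𝔞)) x : 𝔞)

/-- Orthogonal projection onto the orthogonal complement of the span of a finite set. -/
noncomputable def projPerp (S : Finset 𝔞) (x : 𝔞) : 𝔞 :=
  (Submodule.orthogonalProjection (Submodule.span ℝ (S : Set 𝔞))ᗮ x : 𝔞)

/-- The ℂ-bilinear pairing `⟨λ, ξ⟩` of `λ = λre + i·λim ∈ 𝔞_ℂ` with `ξ ∈ 𝔞`. -/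
noncomputable def pairC (lamRe lamIm ξ : 𝔞) : ℂ :=
  (⟪lamRe, ξ⟫ : ℂ) + Complex.I * (⟪lamIm, ξ⟫ : ℂ)

/-- If `g` is a `π_𝔰`-factorizing eigenfunction of the Cherednik
operators with spectral parameter `π_𝔰 λ`, then `f(x) = e^{⟨π_𝔠 λ, π_𝔠 x⟩} g(x)`
is an eigenfunction with spectral parameter `λ`, normalized by `f(0) = 1`. -/
theorem cherednik_eigenfunction_extension
    (R : Finset 𝔞) (hR : IsIntegralRootSystem R)
    (Rp : Finset 𝔞) (hRp : IsPositiveSystem R Rp)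
    (k : 𝔞 → ℝ) (hk : ∀ α ∈ R, ∀ β ∈ R, k (sRefl α β) = k β)
    (lamRe lamIm : 𝔞) (g : 𝔞 → ℂ) (hg : ContDiff ℝ 1 g) (hg0 : g 0 = 1)
    (hgproj : ∀ x : 𝔞, g x = g (projSpan R x))
    (hgeig : ∀ ξ x : 𝔞, IsRegularPt R x →
      cherednik Rp k ξ g x = pairC (projSpan R lamRe) (projSpan R lamIm) ξ * g x) :
    (Complex.exp (pairC (projPerp R lamRe) (projPerp R lamIm) (projPerp R (0 : 𝔞))) * g 0 = 1) ∧
    ∀ ξ x : 𝔞, IsRegularPt R x →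
      cherednik Rp k ξ
          (fun y => Complex.exp (pairC (projPerp R lamRe) (projPerp R lamIm) (projPerp R y)) * g y) x
        = pairC lamRe lamIm ξ
          * (Complex.exp (pairC (projPerp R lamRe) (projPerp R lamIm) (projPerp R x)) * g x) := by
  classical
  obtain ⟨v, hv1, hv2⟩ := hRp
  set K := Submodule.span ℝ ((R : Finset 𝔞) : Set 𝔞) with hKdef
  have hPP0 : projPerp R (0:𝔞) = (0:𝔞) := by simp [projPerp]
  have hpair0 : pairC (projPerp R lamRe) (projPerp R lamIm) (projPerp R (0:𝔞)) = 0 := by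
    simp [hPP0, pairC]
  refine ⟨by simp [hpair0, hg0], ?_⟩
  intro ξ x hx
  have hmemPerp : ∀ v : 𝔞, projPerp R v ∈ Kᗮ := fun v => (Submodule.orthogonalProjection Kᗮ v).2
  have hmemSpan : ∀ v : 𝔞, projSpan R v ∈ K := fun v => (Submodule.orthogonalProjection K v).2
  have hdecomp : ∀ v : 𝔞, projSpan R v + projPerp R v = v := fun v =>
    K.starProjection_add_starProjection_orthogonal v
  have hinner : ∀ v y : 𝔞, ⟪projPerp R v, projPerp R y⟫ = ⟪projPerp R v, y⟫ := by
    intro v y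
    have h0 : ⟪projPerp R v, projSpan R y⟫ = (0:ℝ) := by
      have := (Submodule.mem_orthogonal _ _).1 (hmemPerp v) _ (hmemSpan y)
      rwa [real_inner_comm] at this
    conv_rhs => rw [← hdecomp y]
    rw [inner_add_right, h0, zero_add]
  -- the continuous linear map y ↦ pairC (projPerp lamRe) (projPerp lamIm) (projPerp y)
  set P : 𝔞 →L[ℝ] 𝔞 := (Kᗮ : Submodule ℝ 𝔞).subtypeL.comp (Submodule.orthogonalProjection (Kᗮ : Submodule ℝ 𝔞)) with hPdef
  have hPapp : ∀ y : 𝔞, P y = projPerp R y := fun y => rfl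
  set L : 𝔞 →L[ℝ] ℂ :=
    Complex.ofRealCLM.comp ((innerSL ℝ (projPerp R lamRe)).comp P)
      + Complex.I • Complex.ofRealCLM.comp ((innerSL ℝ (projPerp R lamIm)).comp P) with hLdef
  have hLapp : ∀ y : 𝔞, L y = pairC (projPerp R lamRe) (projPerp R lamIm) (projPerp R y) := by
    intro y
    simp [hLdef, pairC, hPapp, innerSL_apply_apply]
  have hLxi : L ξ = pairC (projPerp R lamRe) (projPerp R lamIm) ξ := by
    rw [hLapp]
    simp only [pairC, hinner]
  set E : 𝔞 → ℂ := fun y =>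
    Complex.exp (pairC (projPerp R lamRe) (projPerp R lamIm) (projPerp R y)) with hEdef
  have hE : ∀ y, E y = Complex.exp (L y) := fun y => by rw [hEdef, hLapp]
  have hEfun : E = fun y => Complex.exp (L y) := funext hE
  have hEd : HasFDerivAt E (Complex.exp (L x) • L) x := by
    rw [hEfun]; exact (L.hasFDerivAt).cexp
  have hgd : HasFDerivAt g (fderiv ℝ g x) x :=
    ((hg.differentiable one_ne_zero) x).hasFDerivAt
  have hfd : HasFDerivAt (fun y => E y * g y)
      (E x • fderiv ℝ g x + g x • (Complex.exp (L x) • L)) x := hEd.mul hgd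
  -- E is invariant under the reflections appearing in the sum
  have hErefl : ∀ α ∈ Rp, E (sRefl α x) = E x := by
    intro α hα
    have hαR : α ∈ R := ((hv2 α).1 hα).1
    have hαK : α ∈ K := Submodule.subset_span (by exact_mod_cast hαR)
    have h0 : Submodule.orthogonalProjection Kᗮ α = 0 :=
      Submodule.orthogonalProjectionOnto_apply_of_mem_orthogonal
        (K.le_orthogonal_orthogonal hαK)
    have hperp : projPerp R (sRefl α x) = projPerp R x := by
      simp [projPerp, sRefl, map_sub, map_smul, h0, ← hKdef, K.starProjection_eq_self_iff.mpr hαK]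
    rw [hEdef]; simp only [hperp]
  -- main computation
  show cherednik Rp k ξ (fun y => E y * g y) x
      = pairC lamRe lamIm ξ * (E x * g x)
  have heig := hgeig ξ x hx
  have hsum : pairC (projSpan R lamRe) (projSpan R lamIm) ξ
      + pairC (projPerp R lamRe) (projPerp R lamIm) ξ = pairC lamRe lamIm ξ := by
    have h1 : ⟪projSpan R lamRe, ξ⟫ + ⟪projPerp R lamRe, ξ⟫ = ⟪lamRe, ξ⟫ := by
      rw [← inner_add_left, hdecomp]
    have h2 : ⟪projSpan R lamIm, ξ⟫ + ⟪projPerp R lamIm, ξ⟫ = ⟪lamIm, ξ⟫ := by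
      rw [← inner_add_left, hdecomp]
    simp only [pairC]
    rw [← h1, ← h2]; push_cast; ring
  simp only [cherednik] at heig ⊢
  rw [hfd.fderiv]
  have hS : ∑ α ∈ Rp, ((k α * ⟪α, ξ⟫ : ℝ) : ℂ) * (E x * g x - E (sRefl α x) * g (sRefl α x))
        / (1 - Complex.exp (-(⟪α, x⟫ : ℝ) : ℂ))
      = E x * ∑ α ∈ Rp, ((k α * ⟪α, ξ⟫ : ℝ) : ℂ) * (g x - g (sRefl α x))
        / (1 - Complex.exp (-(⟪α, x⟫ : ℝ) : ℂ)) := by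
    rw [Finset.mul_sum]
    refine Finset.sum_congr rfl fun α hα => ?_
    rw [hErefl α hα]; ring
  simp only [ContinuousLinearMap.add_apply, ContinuousLinearMap.smul_apply, smul_eq_mul]
  rw [hS, ← hE x]
  linear_combination (E x) * heig + (E x * g x) * hsum + (g x * E x) * hLxi
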